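/- arXiv:1808.06189 — 5 statements merged into one kernel-verified Lean document; each statement's English description precedes it below -/
import Mathlib

section
/- One has lim_{t→∞} 1/(b(t)² (B(t)+1)) = 0, where B(t) := ∫₀^t b(σ)^{−1} dσ. -/
/-! With `u = 1/b` one has `(u²)' = 2u · (-b'/b²)`, and `-b'/b² ≤ |b'|/b² → 0`. Hence for every
`ε > 0` eventually `(u²)' ≤ ε u = ε B'`, so `u²` grows at most like `ε B`; since `B → ∞`,
`u² / (B + 1) = 1 / (b² (B + 1))` tends to `0`. -/

open Filter Set MeasureTheory

theorem tendsto_div_add_one_of_sub_le {v B : ℝ → ℝ} (hv : ∀ᶠ t in atTop, 0 ≤ v t)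
    (hB : Tendsto B atTop atTop)
    (hinc : ∀ ε > 0, ∃ T, ∀ t ≥ T, v t - v T ≤ ε * (B t - B T)) :
    Tendsto (fun t => v t / (B t + 1)) atTop (nhds 0) := by
  have hB1 : ∀ᶠ t in atTop, 0 < B t + 1 :=
    (tendsto_atTop_add_const_right atTop 1 hB).eventually_gt_atTop 0
  refine tendsto_order.2 ⟨fun a ha => ?_, fun a ha => ?_⟩
  · filter_upwards [hv, hB1] with t hvt hBt
    exact ha.trans_le (div_nonneg hvt hBt.le)
  · obtain ⟨T, hT⟩ := hinc (a / 2) (half_pos ha)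
    set K := v T - a / 2 * B T with hK_def
    have hK : Tendsto (fun t => K / (B t + 1)) atTop (nhds 0) :=
      (tendsto_atTop_add_const_right atTop 1 hB).const_div_atTop K
    filter_upwards [hK.eventually_lt_const (half_pos ha), hB1, eventually_ge_atTop T]
      with t hKt hBt htT
    have hvt : v t ≤ K + a / 2 * (B t + 1) := by linarith [hT t htT, hK_def]
    calc v t / (B t + 1) ≤ K / (B t + 1) + a / 2 := by
          rw [div_add' _ _ _ hBt.ne', div_le_div_iff_of_pos_right hBt]; linarith
      _ < a := by linarith

theorem hasDerivAt_inv_sq {b : ℝ → ℝ} {s : ℝ} (hb : DifferentiableAt ℝ b s) (hs : b s ≠ 0) :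
    HasDerivAt (fun x => (b x)⁻¹ ^ 2) (2 * (b s)⁻¹ * (-deriv b s / b s ^ 2)) s := by
  have hinv : HasDerivAt (fun x => (b x)⁻¹) (-deriv b s / b s ^ 2) s := hb.hasDerivAt.inv hs
  have hsq : HasDerivAt (fun x => (b x)⁻¹ ^ 2)
      ((2 : ℕ) * (b s)⁻¹ ^ (2 - 1) * (-deriv b s / b s ^ 2)) s := hinv.pow 2
  convert hsq using 1
  norm_num

theorem inv_sq_sub_le_of_neg_deriv_div_sq_le {b : ℝ → ℝ} {a t δ : ℝ} (hb : Differentiable ℝ b)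
    (hat : a ≤ t) (hpos : ∀ s ∈ Icc a t, 0 < b s)
    (hδ : ∀ s ∈ Ioo a t, -deriv b s / b s ^ 2 ≤ δ) :
    (b t)⁻¹ ^ 2 - (b a)⁻¹ ^ 2 ≤ 2 * δ * ∫ s in a..t, (b s)⁻¹ := by
  have hinv : ContinuousOn (fun s => (b s)⁻¹) (Icc a t) :=
    hb.continuous.continuousOn.inv₀ fun s hs => (hpos s hs).ne'
  rw [← intervalIntegral.integral_const_mul]
  refine intervalIntegral.sub_le_integral_of_hasDeriv_right_of_le hat (hinv.pow 2)
    (fun s hs => (hasDerivAt_inv_sq (hb s) (hpos s (Ioo_subset_Icc_self hs)).ne').hasDerivWithinAt)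
    ((hinv.const_smul (2 * δ)).integrableOn_Icc) fun s hs => ?_
  have hbs := hpos s (Ioo_subset_Icc_self hs)
  have hbound := mul_le_mul_of_nonneg_left (hδ s hs) (inv_pos.2 hbs).le
  linarith

theorem exists_inv_sq_sub_le_mul_integral_sub {b : ℝ → ℝ} (hb : Differentiable ℝ b)
    (hbpos : ∀ t ≥ (0 : ℝ), 0 < b t)
    (hdecay : ∀ δ > 0, ∀ᶠ s in atTop, -deriv b s / b s ^ 2 ≤ δ) {ε : ℝ} (hε : 0 < ε) :
    ∃ T, ∀ t ≥ T, (b t)⁻¹ ^ 2 - (b T)⁻¹ ^ 2 ≤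
      ε * ((∫ σ in (0 : ℝ)..t, (b σ)⁻¹) - ∫ σ in (0 : ℝ)..T, (b σ)⁻¹) := by
  obtain ⟨T₀, hT₀⟩ := eventually_atTop.1 (hdecay (ε / 2) (half_pos hε))
  have hinv : ContinuousOn (fun σ => (b σ)⁻¹) (Ici 0) :=
    hb.continuous.continuousOn.inv₀ fun σ hσ => (hbpos σ hσ).ne'
  have hint : ∀ t ≥ (0 : ℝ), IntervalIntegrable (fun σ => (b σ)⁻¹) volume 0 t := fun t ht =>
    (hinv.mono Icc_subset_Ici_self).intervalIntegrable_of_Icc ht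
  refine ⟨max T₀ 0, fun t ht => ?_⟩
  have hT0 : 0 ≤ max T₀ 0 := le_max_right _ _
  rw [intervalIntegral.integral_interval_sub_left (hint t (hT0.trans ht)) (hint _ hT0)]
  convert inv_sq_sub_le_of_neg_deriv_div_sq_le hb ht (fun s hs => hbpos s (hT0.trans hs.1))
    (fun s hs => hT₀ s ((le_max_left _ _).trans hs.1.le)) using 2
  ring

theorem stmt_2_general (b : ℝ → ℝ) (hb : ContDiff ℝ 1 b)
    (hbpos : ∀ t ≥ (0 : ℝ), 0 < b t)
    (hnotover : Filter.Tendsto (fun t => ∫ σ in (0:ℝ)..t, (b σ)⁻¹)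
      Filter.atTop Filter.atTop)
    (γ C : ℝ) (hγ : 0 < γ)
    (hb' : ∀ t > (0 : ℝ), |deriv b t| / (b t) ^ 2 ≤ C * (1 + t) ^ (-γ)) :
    Filter.Tendsto (fun t => 1 / ((b t) ^ 2 * ((∫ σ in (0:ℝ)..t, (b σ)⁻¹) + 1)))
      Filter.atTop (nhds 0) := by
  have hdecay : ∀ δ > 0, ∀ᶠ s in atTop, -deriv b s / b s ^ 2 ≤ δ := by
    intro δ hδ
    have hlim : Tendsto (fun s : ℝ => C * (1 + s) ^ (-γ)) atTop (nhds 0) := by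
      simpa using ((tendsto_rpow_neg_atTop hγ).comp
        (tendsto_atTop_add_const_left atTop 1 tendsto_id)).const_mul C
    filter_upwards [hlim.eventually_le_const hδ, eventually_gt_atTop 0] with s hs hs0
    calc -deriv b s / b s ^ 2 ≤ |deriv b s| / b s ^ 2 := by gcongr; exact neg_le_abs _
      _ ≤ C * (1 + s) ^ (-γ) := hb' s hs0
      _ ≤ δ := hs
  simp_rw [one_div, mul_inv, ← inv_pow, ← div_eq_mul_inv]
  exact tendsto_div_add_one_of_sub_le (.of_forall fun _ => sq_nonneg _) hnotover fun _ hε =>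
    exists_inv_sq_sub_le_mul_integral_sub (hb.differentiable one_ne_zero) hbpos hdecay hε

/-- If `b ∈ C¹([0,∞))` is positive on `[0,∞)`, `∫₀^∞ b(σ)⁻¹ dσ = ∞`, and
`|b'(t)|/b(t)² ≤ C (1+t)^{−γ}` for all `t > 0` (with `γ > 0`, `C > 0`), then
`lim_{t→∞} 1/(b(t)² (B(t)+1)) = 0`, where `B(t) = ∫₀^t b(σ)⁻¹ dσ`. -/
theorem stmt_2 (b : ℝ → ℝ) (hb : ContDiff ℝ 1 b)
    (hbpos : ∀ t ≥ (0 : ℝ), 0 < b t)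
    (hnotover : Filter.Tendsto (fun t => ∫ σ in (0:ℝ)..t, (b σ)⁻¹)
      Filter.atTop Filter.atTop)
    (γ C : ℝ) (hγ : 0 < γ) (hC : 0 < C)
    (hb' : ∀ t > (0 : ℝ), |deriv b t| / (b t) ^ 2 ≤ C * (1 + t) ^ (-γ)) :
    Filter.Tendsto (fun t => 1 / ((b t) ^ 2 * ((∫ σ in (0:ℝ)..t, (b σ)⁻¹) + 1)))
      Filter.atTop (nhds 0) :=
  stmt_2_general b hb hbpos hnotover γ C hγ hb'
end

section
/- Let p > 1, θ > 0, δ > 0, C₀ > 0 and 0 < R₁ < R̃ ≤ ∞. Suppose Y : [R₁, R̃) → [0,∞) is differentiable, nondecreasing, and satisfies (δ + (log 2) Y(R))^p ≤ C₀^p R^{1−θ(p−1)} Y'(R) for every R ∈ [R₁, R̃). Then for every R ∈ [R₁, R̃) one has R^{(p−1)θ} ≤ R₁^{(p−1)θ} + (log 2)^{−1} θ C₀^p δ^{−(p−1)}; in particular R̃ is finite and R̃^{(p−1)θ} ≤ R₁^{(p−1)θ} + (log 2)^{−1} θ C₀^p δ^{−(p−1)}. -/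
open Filter

/-- Core differential inequality (case `θ > 0`) behind the test-function lemma.
If `Y : [R₁, R̃) → [0,∞)` is differentiable, nondecreasing and satisfies
`(δ + (log 2) Y(R))^p ≤ C₀^p R^{1−θ(p−1)} Y'(R)` on `[R₁, R̃)`, then
`R^{(p−1)θ} ≤ R₁^{(p−1)θ} + (log 2)⁻¹ θ C₀^p δ^{−(p−1)}` for all `R ∈ [R₁, R̃)`;
in particular `R̃` is finite and the same bound holds for `R̃`. -/
theorem stmt_8 (p θ δ C₀ R₁ : ℝ) (hp : 1 < p) (hθ : 0 < θ) (hδ : 0 < δ)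
    (hC₀ : 0 < C₀) (hR₁ : 0 < R₁) (Rt : EReal) (hRt : (R₁ : EReal) < Rt)
    (Y : ℝ → ℝ)
    (hY0 : ∀ R : ℝ, R₁ ≤ R → (R : EReal) < Rt → 0 ≤ Y R)
    (hYd : ∀ R : ℝ, R₁ ≤ R → (R : EReal) < Rt → DifferentiableAt ℝ Y R)
    (hYmono : ∀ R S : ℝ, R₁ ≤ R → R ≤ S → (S : EReal) < Rt → Y R ≤ Y S)
    (hYineq : ∀ R : ℝ, R₁ ≤ R → (R : EReal) < Rt →
      (δ + Real.log 2 * Y R) ^ p ≤ C₀ ^ p * R ^ (1 - θ * (p - 1)) * deriv Y R) :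
    (∀ R : ℝ, R₁ ≤ R → (R : EReal) < Rt →
      R ^ ((p - 1) * θ) ≤
        R₁ ^ ((p - 1) * θ) + (Real.log 2)⁻¹ * θ * C₀ ^ p * δ ^ (-(p - 1))) ∧
    Rt ≠ ⊤ ∧
    Rt.toReal ^ ((p - 1) * θ) ≤
      R₁ ^ ((p - 1) * θ) + (Real.log 2)⁻¹ * θ * C₀ ^ p * δ ^ (-(p - 1)) := by
  open Set in
  set L := Real.log 2 with hLdef
  have hL : 0 < L := Real.log_pos one_lt_two
  have hp1 : 0 < p - 1 := by linarith
  set a := θ * (p - 1) with ha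
  have ha0 : 0 < a := by positivity
  have hCp : 0 < C₀ ^ p := Real.rpow_pos_of_pos hC₀ p
  set c := L / (θ * C₀ ^ p) with hc
  have hc0 : 0 < c := by positivity
  set W : ℝ → ℝ := fun x => c * x ^ a + (δ + L * Y x) ^ (-(p - 1)) with hWdef
  have main : ∀ R : ℝ, R₁ ≤ R → (R : EReal) < Rt →
      R ^ ((p - 1) * θ) ≤
        R₁ ^ ((p - 1) * θ) + L⁻¹ * θ * C₀ ^ p * δ ^ (-(p - 1)) := by
    intro R hR₁R hRRt
    -- every point of [R₁, R] is in the domain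
    have hdom : ∀ x ∈ Icc R₁ R, R₁ ≤ x ∧ (x : EReal) < Rt := by
      intro x hx
      exact ⟨hx.1, lt_of_le_of_lt (EReal.coe_le_coe_iff.2 hx.2) hRRt⟩
    have hderiv : ∀ x : ℝ, R₁ ≤ x → (x : EReal) < Rt →
        HasDerivAt W (c * (a * x ^ (a - 1)) +
          (L * deriv Y x) * (-(p - 1)) * (δ + L * Y x) ^ (-(p - 1) - 1)) x := by
      intro x hx1 hx2
      have hx0 : 0 < x := lt_of_lt_of_le hR₁ hx1
      have h1 : HasDerivAt (fun y : ℝ => c * y ^ a) (c * (a * x ^ (a - 1))) x :=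
        (Real.hasDerivAt_rpow_const (Or.inl hx0.ne')).const_mul c
      have hu : 0 < δ + L * Y x := by
        have := hY0 x hx1 hx2
        positivity
      have hg : HasDerivAt (fun y : ℝ => δ + L * Y y) (L * deriv Y x) x :=
        (((hYd x hx1 hx2).hasDerivAt).const_mul L).const_add δ
      exact h1.add (hg.rpow_const (Or.inl hu.ne'))
    -- the derivative is nonpositive
    have hderiv_le : ∀ x : ℝ, R₁ ≤ x → (x : EReal) < Rt →
        c * (a * x ^ (a - 1)) +
          (L * deriv Y x) * (-(p - 1)) * (δ + L * Y x) ^ (-(p - 1) - 1) ≤ 0 := by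
      intro x hx1 hx2
      have hx0 : 0 < x := lt_of_lt_of_le hR₁ hx1
      have hu : 0 < δ + L * Y x := by
        have := hY0 x hx1 hx2
        positivity
      set u := δ + L * Y x with hu'
      have hup : 0 < u ^ p := Real.rpow_pos_of_pos hu p
      have key : u ^ p * x ^ (a - 1) ≤ C₀ ^ p * deriv Y x := by
        have h := mul_le_mul_of_nonneg_right (hYineq x hx1 hx2)
          (le_of_lt (Real.rpow_pos_of_pos hx0 (a - 1)))
        calc u ^ p * x ^ (a - 1) ≤ C₀ ^ p * x ^ (1 - θ * (p - 1)) * deriv Y x * x ^ (a - 1) := h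
          _ = C₀ ^ p * deriv Y x * (x ^ (1 - a) * x ^ (a - 1)) := by ring
          _ = C₀ ^ p * deriv Y x := by
              rw [← Real.rpow_add hx0]
              norm_num
      -- rewrite negative powers
      have e1 : u ^ (-(p - 1) - 1) = (u ^ p)⁻¹ := by
        rw [show -(p - 1) - 1 = -p by ring, Real.rpow_neg hu.le]
      rw [e1]
      have h2 : u ^ p * x ^ (a - 1) * (u ^ p)⁻¹ ≤ C₀ ^ p * deriv Y x * (u ^ p)⁻¹ :=
        mul_le_mul_of_nonneg_right key (by positivity)
      rw [mul_comm (u ^ p), mul_assoc, mul_inv_cancel₀ hup.ne', mul_one] at h2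
      -- now  x ^ (a-1) ≤ C₀^p * Y' * (u^p)⁻¹
      have hca : c * a = L * (p - 1) / C₀ ^ p := by
        rw [hc, ha]; field_simp
      have hxp : 0 < x ^ (a - 1) := Real.rpow_pos_of_pos hx0 _
      have := mul_le_mul_of_nonneg_left h2 (by positivity : (0:ℝ) ≤ L * (p - 1) / C₀ ^ p)
      calc c * (a * x ^ (a - 1)) +
          (L * deriv Y x) * (-(p - 1)) * (u ^ p)⁻¹
          = L * (p - 1) / C₀ ^ p * x ^ (a - 1)
            - L * (p - 1) * (deriv Y x * (u ^ p)⁻¹) := by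
            rw [← mul_assoc, hca]; ring
        _ ≤ L * (p - 1) / C₀ ^ p * (C₀ ^ p * deriv Y x * (u ^ p)⁻¹)
            - L * (p - 1) * (deriv Y x * (u ^ p)⁻¹) := by linarith
        _ = 0 := by field_simp; ring
    have hanti : AntitoneOn W (Icc R₁ R) := by
      apply antitoneOn_of_deriv_nonpos (convex_Icc _ _)
      · intro x hx
        obtain ⟨h1, h2⟩ := hdom x hx
        exact ((hderiv x h1 h2).differentiableAt).continuousAt.continuousWithinAt
      · intro x hx
        rw [interior_Icc] at hx
        obtain ⟨h1, h2⟩ := hdom x (Ioo_subset_Icc_self hx)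
        exact ((hderiv x h1 h2).differentiableAt).differentiableWithinAt
      · intro x hx
        rw [interior_Icc] at hx
        obtain ⟨h1, h2⟩ := hdom x (Ioo_subset_Icc_self hx)
        rw [(hderiv x h1 h2).deriv]
        exact hderiv_le x h1 h2
    have hWW : W R ≤ W R₁ :=
      hanti (left_mem_Icc.2 hR₁R) (right_mem_Icc.2 hR₁R) hR₁R
    have hu1 : δ ≤ δ + L * Y R₁ := by
      have := hY0 R₁ le_rfl hRt
      nlinarith
    have h3 : (δ + L * Y R₁) ^ (-(p - 1)) ≤ δ ^ (-(p - 1)) :=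
      Real.rpow_le_rpow_of_nonpos hδ hu1 (by linarith)
    have h4 : 0 ≤ (δ + L * Y R) ^ (-(p - 1)) := by
      have hu : 0 < δ + L * Y R := by
        have := hY0 R hR₁R hRRt
        positivity
      positivity
    have h5 : c * R ^ a ≤ c * R₁ ^ a + δ ^ (-(p - 1)) := by
      simp only [hWdef] at hWW
      linarith
    have h6 : R ^ a ≤ R₁ ^ a + δ ^ (-(p - 1)) / c := by
      have h := mul_le_mul_of_nonneg_left h5 (inv_nonneg.2 hc0.le)
      calc R ^ a = c⁻¹ * (c * R ^ a) := by field_simp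
        _ ≤ c⁻¹ * (c * R₁ ^ a + δ ^ (-(p - 1))) := h
        _ = R₁ ^ a + δ ^ (-(p - 1)) / c := by field_simp
    have hconv : δ ^ (-(p - 1)) / c = L⁻¹ * θ * C₀ ^ p * δ ^ (-(p - 1)) := by
      rw [hc]; field_simp
    rw [mul_comm (p - 1) θ]
    rw [hconv] at h6
    exact h6
  have hbot : Rt ≠ ⊥ := fun h => by simp [h] at hRt
  have hne : Rt ≠ ⊤ := by
    intro htop
    have h1 : 0 < R₁ ^ ((p - 1) * θ) := Real.rpow_pos_of_pos hR₁ _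
    have h2 : 0 ≤ L⁻¹ * θ * C₀ ^ p * δ ^ (-(p - 1)) := by positivity
    have hB0 : 0 < R₁ ^ ((p - 1) * θ) + L⁻¹ * θ * C₀ ^ p * δ ^ (-(p - 1)) + 1 := by
      linarith
    have hpθ : 0 < (p - 1) * θ := by positivity
    obtain ⟨B1, hB1⟩ : ∃ B1 : ℝ,
        B1 = R₁ ^ ((p - 1) * θ) + L⁻¹ * θ * C₀ ^ p * δ ^ (-(p - 1)) + 1 := ⟨_, rfl⟩
    have hB1pos : 0 < B1 := hB1 ▸ hB0
    have hRR₁ : R₁ ≤ max R₁ (B1 ^ ((p - 1) * θ)⁻¹) := le_max_left _ _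
    have hRlt : ((max R₁ (B1 ^ ((p - 1) * θ)⁻¹) : ℝ) : EReal) < Rt :=
      htop ▸ EReal.coe_lt_top _
    have hle := main _ hRR₁ hRlt
    have hge : B1 ≤ (max R₁ (B1 ^ ((p - 1) * θ)⁻¹)) ^ ((p - 1) * θ) := by
      have hx1 : B1 ^ ((p - 1) * θ)⁻¹ ≤ max R₁ (B1 ^ ((p - 1) * θ)⁻¹) := le_max_right _ _
      have hx2 : (B1 ^ ((p - 1) * θ)⁻¹) ^ ((p - 1) * θ) ≤
          (max R₁ (B1 ^ ((p - 1) * θ)⁻¹)) ^ ((p - 1) * θ) :=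
        Real.rpow_le_rpow (by positivity) hx1 hpθ.le
      rwa [← Real.rpow_mul hB1pos.le, inv_mul_cancel₀ hpθ.ne', Real.rpow_one] at hx2
    subst hB1
    linarith
  refine ⟨main, hne, ?_⟩
  set r := Rt.toReal with hr
  have hrc : (r : EReal) = Rt := EReal.coe_toReal hne hbot
  have hR₁r : R₁ < r := by
    rw [← hrc] at hRt
    exact_mod_cast hRt
  have hr0 : 0 < r := lt_trans hR₁ hR₁r
  have htend : Tendsto (fun x : ℝ => x ^ ((p - 1) * θ)) (nhdsWithin r (Iio r))
      (nhds (r ^ ((p - 1) * θ))) :=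
    ((Real.continuousAt_rpow_const r _ (Or.inl hr0.ne')).tendsto).mono_left nhdsWithin_le_nhds
  refine le_of_tendsto htend ?_
  filter_upwards [Ioo_mem_nhdsLT_of_mem (⟨hR₁r, le_rfl⟩ : r ∈ Ioc R₁ r)] with x hx
  exact main x hx.1.le (by rw [← hrc]; exact_mod_cast hx.2)
end

section
/- Let p > 1, δ > 0, C₀ > 0 and 0 < R₁ < R̃ ≤ ∞. Suppose Y : [R₁, R̃) → [0,∞) is differentiable, nondecreasing, and satisfies (δ + (log 2) Y(R))^p ≤ C₀^p R Y'(R) for every R ∈ [R₁, R̃). Then for every R ∈ [R₁, R̃) one has log(R/R₁) ≤ ((p−1) log 2)^{−1} C₀^p δ^{−(p−1)}; in particular R̃ is finite and R̃ ≤ R₁ exp(((p−1) log 2)^{−1} C₀^p δ^{−(p−1)}). -/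
/-!
With `Z = δ + (log 2) Y` the hypothesis reads `Z ^ p ≤ (C₀ ^ p / log 2) R Z'`, i.e.
`(log 2 / C₀ ^ p) / R ≤ Z' / Z ^ p = (Z ^ (1 - p) / (1 - p))'`. Integrating from `R₁` to `R`
gives `(log 2 / C₀ ^ p) log (R / R₁) ≤ Z(R₁) ^ (1 - p) / (p - 1) ≤ δ ^ (1 - p) / (p - 1)`,
a bound independent of `R`, which caps the right end `R̃` of the interval.
-/

open Real Set

section BernoulliInequality

variable {Z : ℝ → ℝ} {A p a b : ℝ}

theorem hasDerivAt_rpow_one_sub_div {x Z' : ℝ} (hp : p ≠ 1) (hZ : HasDerivAt Z Z' x)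
    (hx : 0 < Z x) : HasDerivAt (fun y => Z y ^ (1 - p) / (1 - p)) (Z' / Z x ^ p) x := by
  refine ((hZ.rpow_const (p := 1 - p) (Or.inl hx.ne')).div_const (1 - p)).congr_deriv ?_
  rw [sub_sub_cancel_left, rpow_neg hx.le]
  field_simp

theorem log_div_le_of_rpow_le_mul_deriv (hp : p ≠ 1) (ha : 0 < a) (hab : a ≤ b)
    (hZ : ∀ x ∈ Icc a b, 0 < Z x) (hd : ∀ x ∈ Icc a b, DifferentiableAt ℝ Z x)
    (h : ∀ x ∈ Icc a b, Z x ^ p ≤ A * x * deriv Z x) :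
    log (b / a) ≤ A * (Z b ^ (1 - p) - Z a ^ (1 - p)) / (1 - p) := by
  set G : ℝ → ℝ := fun x => A * (Z x ^ (1 - p) / (1 - p)) - log x
  have hG : ∀ x ∈ Icc a b, HasDerivAt G (A * (deriv Z x / Z x ^ p) - x⁻¹) x := fun x hx =>
    ((hasDerivAt_rpow_one_sub_div hp (hd x hx).hasDerivAt (hZ x hx)).const_mul A).sub
      (hasDerivAt_log (ha.trans_le hx.1).ne')
  have hG' : ∀ x ∈ Icc a b, 0 ≤ A * (deriv Z x / Z x ^ p) - x⁻¹ := by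
    intro x hx
    have hx0 : 0 < x := ha.trans_le hx.1
    have hZp : 0 < Z x ^ p := rpow_pos_of_pos (hZ x hx) p
    rw [sub_nonneg, ← mul_div_assoc, le_div_iff₀ hZp, inv_mul_le_iff₀ hx0]
    linarith [h x hx]
  have hmono : MonotoneOn G (Icc a b) := by
    refine monotoneOn_of_deriv_nonneg (convex_Icc a b)
      (fun x hx => (hG x hx).continuousAt.continuousWithinAt)
      (fun x hx => (hG x (interior_subset hx)).differentiableAt.differentiableWithinAt)
      (fun x hx => ?_)
    rw [(hG x (interior_subset hx)).deriv]
    exact hG' x (interior_subset hx)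
  have := hmono (left_mem_Icc.mpr hab) (right_mem_Icc.mpr hab) hab
  rw [log_div (ha.trans_le hab).ne' ha.ne']
  simp only [G] at this
  linarith [show A * (Z b ^ (1 - p) - Z a ^ (1 - p)) / (1 - p)
    = A * (Z b ^ (1 - p) / (1 - p)) - A * (Z a ^ (1 - p) / (1 - p)) by ring]

theorem log_div_le_of_rpow_le_mul_deriv_of_one_lt (hp : 1 < p) (hA : 0 ≤ A) (ha : 0 < a)
    (hab : a ≤ b) (hZ : ∀ x ∈ Icc a b, 0 < Z x) (hd : ∀ x ∈ Icc a b, DifferentiableAt ℝ Z x)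
    (h : ∀ x ∈ Icc a b, Z x ^ p ≤ A * x * deriv Z x) :
    log (b / a) ≤ A * Z a ^ (1 - p) / (p - 1) := by
  have hb := rpow_nonneg (hZ b (right_mem_Icc.mpr hab)).le (1 - p)
  calc log (b / a) ≤ A * (Z b ^ (1 - p) - Z a ^ (1 - p)) / (1 - p) :=
        log_div_le_of_rpow_le_mul_deriv hp.ne' ha hab hZ hd h
    _ = A * Z a ^ (1 - p) / (p - 1) - A * Z b ^ (1 - p) / (p - 1) := by
        have : p - 1 ≠ 0 := sub_ne_zero.mpr hp.ne'
        have : 1 - p ≠ 0 := sub_ne_zero.mpr hp.ne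
        field_simp
        ring
    _ ≤ A * Z a ^ (1 - p) / (p - 1) :=
        sub_le_self _ (div_nonneg (mul_nonneg hA hb) (sub_nonneg.mpr hp.le))

theorem log_div_le_of_add_mul_rpow_le_mul_deriv {Y : ℝ → ℝ} {δ c C : ℝ} (hp : 1 < p)
    (hδ : 0 < δ) (hc : 0 < c) (hC : 0 ≤ C) (ha : 0 < a) (hab : a ≤ b)
    (hY : ∀ x ∈ Icc a b, 0 ≤ Y x) (hd : ∀ x ∈ Icc a b, DifferentiableAt ℝ Y x)
    (h : ∀ x ∈ Icc a b, (δ + c * Y x) ^ p ≤ C * x * deriv Y x) :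
    log (b / a) ≤ C / c * δ ^ (1 - p) / (p - 1) := by
  have hδZ : ∀ x ∈ Icc a b, δ ≤ δ + c * Y x := fun x hx =>
    le_add_of_nonneg_right (mul_nonneg hc.le (hY x hx))
  calc log (b / a) ≤ C / c * (δ + c * Y a) ^ (1 - p) / (p - 1) := by
        refine log_div_le_of_rpow_le_mul_deriv_of_one_lt (Z := fun x => δ + c * Y x) hp
          (div_nonneg hC hc.le) ha hab (fun x hx => hδ.trans_le (hδZ x hx))
          (fun x hx => ((hd x hx).const_mul c).const_add δ) fun x hx => ?_
        rw [deriv_const_add, deriv_const_mul _ (hd x hx)]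
        convert h x hx using 1
        field_simp
    _ ≤ C / c * δ ^ (1 - p) / (p - 1) := by
        have hZa := rpow_le_rpow_of_nonpos hδ (hδZ a (left_mem_Icc.mpr hab))
          (by linarith : 1 - p ≤ 0)
        exact div_le_div_of_nonneg_right (mul_le_mul_of_nonneg_left hZa (div_nonneg hC hc.le))
          (by linarith)

end BernoulliInequality

theorem EReal.le_coe_of_forall_coe_lt_le {x : EReal} {a B : ℝ} (hax : (a : EReal) < x)
    (h : ∀ R : ℝ, a ≤ R → (R : EReal) < x → R ≤ B) : x ≤ B := by
  by_contra! hBx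
  obtain ⟨R, hR, hRx⟩ := EReal.lt_iff_exists_real_btwn.mp (max_lt hax hBx)
  obtain ⟨haR, hBR⟩ := max_lt_iff.mp hR
  exact (EReal.coe_lt_coe_iff.mp hBR).not_ge (h R (EReal.coe_lt_coe_iff.mp haR).le hRx)

theorem stmt_9_general (p δ C₀ R₁ : ℝ) (hp : 1 < p) (hδ : 0 < δ)
    (hC₀ : 0 < C₀) (hR₁ : 0 < R₁) (Rt : EReal) (hRt : (R₁ : EReal) < Rt)
    (Y : ℝ → ℝ)
    (hY0 : ∀ R : ℝ, R₁ ≤ R → (R : EReal) < Rt → 0 ≤ Y R)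
    (hYd : ∀ R : ℝ, R₁ ≤ R → (R : EReal) < Rt → DifferentiableAt ℝ Y R)
    (hYineq : ∀ R : ℝ, R₁ ≤ R → (R : EReal) < Rt →
      (δ + Real.log 2 * Y R) ^ p ≤ C₀ ^ p * R * deriv Y R) :
    (∀ R : ℝ, R₁ ≤ R → (R : EReal) < Rt →
      Real.log (R / R₁) ≤ ((p - 1) * Real.log 2)⁻¹ * C₀ ^ p * δ ^ (-(p - 1))) ∧
    Rt ≠ ⊤ ∧
    Rt.toReal ≤ R₁ * Real.exp (((p - 1) * Real.log 2)⁻¹ * C₀ ^ p * δ ^ (-(p - 1))) := by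
  set K := ((p - 1) * log 2)⁻¹ * C₀ ^ p * δ ^ (-(p - 1))
  have hbound : ∀ R : ℝ, R₁ ≤ R → (R : EReal) < Rt → log (R / R₁) ≤ K := by
    intro R hR hRRt
    have hdom : ∀ x ∈ Icc R₁ R, R₁ ≤ x ∧ (x : EReal) < Rt := fun x hx =>
      ⟨hx.1, lt_of_le_of_lt (EReal.coe_le_coe_iff.mpr hx.2) hRRt⟩
    convert log_div_le_of_add_mul_rpow_le_mul_deriv hp hδ (log_pos one_lt_two)
      (rpow_nonneg hC₀.le p) hR₁ hR (fun x hx => hY0 x (hdom x hx).1 (hdom x hx).2)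
      (fun x hx => hYd x (hdom x hx).1 (hdom x hx).2)
      (fun x hx => hYineq x (hdom x hx).1 (hdom x hx).2) using 1
    simp only [K]
    rw [neg_sub]
    field_simp
  have hRt_le := EReal.le_coe_of_forall_coe_lt_le (B := R₁ * exp K) hRt fun R hR hRRt => by
    rw [← div_le_iff₀' hR₁, ← log_le_iff_le_exp (div_pos (hR₁.trans_le hR) hR₁)]
    exact hbound R hR hRRt
  refine ⟨hbound, ne_top_of_le_ne_top (EReal.coe_ne_top _) hRt_le, ?_⟩
  simpa only [EReal.toReal_coe] using
    EReal.toReal_le_toReal hRt_le (ne_bot_of_gt hRt) (EReal.coe_ne_top _)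

/-- Core differential inequality (case `θ = 0`) behind the test-function lemma.
If `Y : [R₁, R̃) → [0,∞)` is differentiable, nondecreasing and satisfies
`(δ + (log 2) Y(R))^p ≤ C₀^p R Y'(R)` on `[R₁, R̃)`, then
`log(R/R₁) ≤ ((p−1) log 2)⁻¹ C₀^p δ^{−(p−1)}` for all `R ∈ [R₁, R̃)`;
in particular `R̃` is finite and
`R̃ ≤ R₁ exp(((p−1) log 2)⁻¹ C₀^p δ^{−(p−1)})`. -/
theorem stmt_9 (p δ C₀ R₁ : ℝ) (hp : 1 < p) (hδ : 0 < δ)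
    (hC₀ : 0 < C₀) (hR₁ : 0 < R₁) (Rt : EReal) (hRt : (R₁ : EReal) < Rt)
    (Y : ℝ → ℝ)
    (hY0 : ∀ R : ℝ, R₁ ≤ R → (R : EReal) < Rt → 0 ≤ Y R)
    (hYd : ∀ R : ℝ, R₁ ≤ R → (R : EReal) < Rt → DifferentiableAt ℝ Y R)
    (hYmono : ∀ R S : ℝ, R₁ ≤ R → R ≤ S → (S : EReal) < Rt → Y R ≤ Y S)
    (hYineq : ∀ R : ℝ, R₁ ≤ R → (R : EReal) < Rt →
      (δ + Real.log 2 * Y R) ^ p ≤ C₀ ^ p * R * deriv Y R) :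
    (∀ R : ℝ, R₁ ≤ R → (R : EReal) < Rt →
      Real.log (R / R₁) ≤ ((p - 1) * Real.log 2)⁻¹ * C₀ ^ p * δ ^ (-(p - 1))) ∧
    Rt ≠ ⊤ ∧
    Rt.toReal ≤ R₁ * Real.exp (((p - 1) * Real.log 2)⁻¹ * C₀ ^ p * δ ^ (-(p - 1))) :=
  stmt_9_general p δ C₀ R₁ hp hδ hC₀ hR₁ Rt hRt Y hY0 hYd hYineq
end

section
/- Let Φ : [0,∞) → [0,∞) be differentiable with M := sup_{s ≥ 0} |Φ'(s)| < ∞. Then for every t ≥ 0 one has Φ(t)² ≤ max{Φ(0)², 2M} · (1 + ∫₀^t Φ(σ) dσ). -/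
open Set

/- With `C = max (Φ(0)², 2M)`, the function `Φ² - C ∫₀ Φ` has derivative `Φ (2Φ' - C) ≤ 0` on
`[0, ∞)`, since `Φ ≥ 0` and `2Φ' ≤ 2M ≤ C`. Hence it never exceeds its value `Φ(0)² ≤ C` at `0`. -/

theorem hasDerivAt_sq_sub_mul_integral {Φ : ℝ → ℝ} (hΦ : Differentiable ℝ Φ) (a C x : ℝ) :
    HasDerivAt (fun s => Φ s ^ 2 - C * ∫ σ in a..s, Φ σ)
      (Φ x * (2 * deriv Φ x - C)) x := by
  have hint : HasDerivAt (fun s => ∫ σ in a..s, Φ σ) (Φ x) x :=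
    (hΦ.continuous.integral_hasStrictDerivAt a x).hasDerivAt
  exact ((hΦ x).hasDerivAt.fun_pow 2 |>.sub (hint.const_mul C)).congr_deriv (by push_cast; ring)

theorem antitoneOn_sq_sub_mul_integral {Φ : ℝ → ℝ} (hΦ : Differentiable ℝ Φ) {a C : ℝ}
    (hΦ_nonneg : ∀ s ≥ a, 0 ≤ Φ s) (hC : ∀ s ≥ a, 2 * deriv Φ s ≤ C) :
    AntitoneOn (fun s => Φ s ^ 2 - C * ∫ σ in a..s, Φ σ) (Ici a) := by
  have hderiv := hasDerivAt_sq_sub_mul_integral hΦ a C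
  refine antitoneOn_of_deriv_nonpos (convex_Ici a)
    (fun x _ => (hderiv x).continuousAt.continuousWithinAt)
    (fun x _ => (hderiv x).differentiableAt.differentiableWithinAt) fun x hx => ?_
  rw [interior_Ici] at hx
  rw [(hderiv x).deriv]
  exact mul_nonpos_of_nonneg_of_nonpos (hΦ_nonneg x hx.le) (by linarith [hC x hx.le])

/-- If `Φ : [0,∞) → [0,∞)` is differentiable with `|Φ'| ≤ M` on `[0,∞)`, then
for every `t ≥ 0` one has `Φ(t)² ≤ max{Φ(0)², 2M} (1 + ∫₀^t Φ(σ) dσ)`. -/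
theorem stmt_10 (Φ : ℝ → ℝ) (hΦ : Differentiable ℝ Φ)
    (hΦ0 : ∀ s ≥ (0 : ℝ), 0 ≤ Φ s)
    (M : ℝ) (hM : ∀ s ≥ (0 : ℝ), |deriv Φ s| ≤ M) :
    ∀ t ≥ (0 : ℝ),
      (Φ t) ^ 2 ≤ max ((Φ 0) ^ 2) (2 * M) * (1 + ∫ σ in (0:ℝ)..t, Φ σ) := by
  intro t ht
  set C := max ((Φ 0) ^ 2) (2 * M)
  have hC : ∀ s ≥ (0 : ℝ), 2 * deriv Φ s ≤ C := fun s hs =>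
    (mul_le_mul_of_nonneg_left (abs_le.mp (hM s hs)).2 two_pos.le).trans (le_max_right _ _)
  have hmono := antitoneOn_sq_sub_mul_integral hΦ hΦ0 hC self_mem_Ici ht ht
  simp only [intervalIntegral.integral_same, mul_zero, sub_zero] at hmono
  linarith [le_max_left ((Φ 0) ^ 2) (2 * M)]
end

section
/- There exists a constant C₂ > 0, depending only on N, p and η, such that for every R > 0 and every (x,t) ∈ ℝ^N × [0,∞) with 1 + |x|² + ∫₀^t Φ(σ) dσ ≤ R, one has |Δ_x ψ_R(x,t)| ≤ C₂ R^{−1} [ψ_R^*(x,t)]^{1/p}. -/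
/-!
Write `ψ_R(·, t) = F(‖·‖²)` with `F(r) = G(R⁻¹ r + R⁻¹(1 + c))`, `G = η ^ (2p')` and
`c = ∫₀ᵗ Φ ≥ 0`. For a radial profile, `Δ_x F(‖x‖²) = 2N F'(‖x‖²) + 4‖x‖² F''(‖x‖²)`, and the
two derivatives of `F` are `R⁻¹ G'` and `R⁻² G''`; the constraint `‖x‖² ≤ R` turns `‖x‖² R⁻²`
into `R⁻¹`. Every term of `G'` and `G''` carries a factor `η ^ (2p' - 2) = (η ^ (2p')) ^ (1/p)`,
and both vanish where `η ≡ 1`, i.e. where `s_R < 1/2`, which is exactly where `ψ_R^*` vanishes.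
-/

open MeasureTheory Filter

section RadialLaplacian

variable {ι : Type*} [Fintype ι] [DecidableEq ι] {f : ℝ → ℝ}

theorem fderiv_comp_norm_sq_apply_single (hf : Differentiable ℝ f) (i : ι)
    (y : EuclideanSpace ℝ ι) :
    fderiv ℝ (fun z : EuclideanSpace ℝ ι => f (‖z‖ ^ 2)) y (EuclideanSpace.single i 1) =
      2 * y i * deriv f (‖y‖ ^ 2) := by
  have hF : HasFDerivAt (fun z : EuclideanSpace ℝ ι => f (‖z‖ ^ 2))
      (deriv f (‖y‖ ^ 2) • 2 • innerSL ℝ y) y :=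
    (hf _).hasDerivAt.comp_hasFDerivAt y (hasStrictFDerivAt_norm_sq y).hasFDerivAt
  rw [hF.fderiv]
  simp only [smul_apply, innerSL_apply_apply,
    EuclideanSpace.inner_single_right, one_mul, smul_eq_mul, nsmul_eq_mul,
    Nat.cast_ofNat, starRingEnd_apply, star_trivial]
  ring

theorem fderiv_fderiv_comp_norm_sq_apply_single (hf : ContDiff ℝ 2 f) (i : ι)
    (x : EuclideanSpace ℝ ι) :
    fderiv ℝ (fun y => fderiv ℝ (fun z : EuclideanSpace ℝ ι => f (‖z‖ ^ 2)) y
        (EuclideanSpace.single i 1)) x (EuclideanSpace.single i 1) =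
      2 * deriv f (‖x‖ ^ 2) + 4 * x i ^ 2 * deriv (deriv f) (‖x‖ ^ 2) := by
  simp_rw [fderiv_comp_norm_sq_apply_single (hf.differentiable two_ne_zero) i]
  have hcoord : HasFDerivAt (fun y : EuclideanSpace ℝ ι => 2 * y i)
      ((2 : ℝ) • EuclideanSpace.proj (𝕜 := ℝ) i) x :=
    (EuclideanSpace.proj (𝕜 := ℝ) i).hasFDerivAt.const_smul (2 : ℝ)
  have hderiv : HasFDerivAt (fun y : EuclideanSpace ℝ ι => deriv f (‖y‖ ^ 2))
      (deriv (deriv f) (‖x‖ ^ 2) • 2 • innerSL ℝ x) x :=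
    (hf.differentiable_deriv_two _).hasDerivAt.comp_hasFDerivAt x
      (hasStrictFDerivAt_norm_sq x).hasFDerivAt
  have hprod : HasFDerivAt (fun y : EuclideanSpace ℝ ι => 2 * y i * deriv f (‖y‖ ^ 2))
      ((2 * x i) • (deriv (deriv f) (‖x‖ ^ 2) • 2 • innerSL ℝ x)
        + deriv f (‖x‖ ^ 2) • (2 : ℝ) • EuclideanSpace.proj (𝕜 := ℝ) i) x :=
    hcoord.mul hderiv
  rw [hprod.fderiv]
  simp only [add_apply, smul_apply, innerSL_apply_apply,
    EuclideanSpace.inner_single_right, one_mul, smul_eq_mul, nsmul_eq_mul,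
    Nat.cast_ofNat, starRingEnd_apply, star_trivial, PiLp.proj_apply,
    PiLp.single_apply, if_true]
  ring

theorem sum_fderiv_fderiv_comp_norm_sq (hf : ContDiff ℝ 2 f) (x : EuclideanSpace ℝ ι) :
    ∑ i, fderiv ℝ (fun y => fderiv ℝ (fun z : EuclideanSpace ℝ ι => f (‖z‖ ^ 2)) y
        (EuclideanSpace.single i 1)) x (EuclideanSpace.single i 1) =
      2 * Fintype.card ι * deriv f (‖x‖ ^ 2) + 4 * ‖x‖ ^ 2 * deriv (deriv f) (‖x‖ ^ 2) := by
  rw [Finset.sum_congr rfl fun i _ => fderiv_fderiv_comp_norm_sq_apply_single hf i x]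
  simp only [Finset.sum_add_distrib,
    Finset.sum_const, Finset.card_univ, nsmul_eq_mul, ← Finset.sum_mul, ← Finset.mul_sum,
    EuclideanSpace.real_norm_sq_eq]
  ring

end RadialLaplacian

theorem deriv_comp_mul_add (g : ℝ → ℝ) (a b : ℝ) :
    deriv (fun r => g (a * r + b)) = fun r => a * deriv g (a * r + b) := by
  funext r
  rw [deriv_comp_mul_left a (fun u => g (u + b)) r, deriv_comp_add_const, smul_eq_mul]

theorem deriv_deriv_comp_mul_add (g : ℝ → ℝ) (a b : ℝ) :
    deriv (deriv fun r => g (a * r + b)) = fun r => a ^ 2 * deriv (deriv g) (a * r + b) := by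
  rw [deriv_comp_mul_add, deriv_comp_mul_add (fun u => a * deriv g u)]
  funext r
  rw [deriv_const_mul_field']
  ring

theorem deriv_eq_zero_of_forall_lt_eq {g : ℝ → ℝ} {a k s : ℝ} (h : ∀ u < a, g u = k)
    (hs : s < a) : deriv g s = 0 := by
  rw [(eventuallyEq_of_mem (Iio_mem_nhds hs) h).deriv_eq, deriv_const]

section PowerOfCutoff

variable {η : ℝ → ℝ} {q s M₁ M₂ : ℝ}

theorem deriv_rpow_const_fun (hη : Differentiable ℝ η) (hq : 1 ≤ q) :
    deriv (fun s => η s ^ q) = fun s => deriv η s * q * η s ^ (q - 1) :=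
  funext fun s => deriv_rpow_const (hη s) (Or.inr hq)

theorem deriv_deriv_rpow_const_fun (hη : ContDiff ℝ 2 η) (hq : 2 ≤ q) (s : ℝ) :
    deriv (deriv fun s => η s ^ q) s = deriv (deriv η) s * q * η s ^ (q - 1)
      + deriv η s * q * (deriv η s * (q - 1) * η s ^ (q - 2)) := by
  have hη₁ := hη.differentiable two_ne_zero
  rw [deriv_rpow_const_fun hη₁ (by linarith), show q - 2 = q - 1 - 1 by ring]
  exact (((hη.differentiable_deriv_two s).hasDerivAt.mul_const q).mul
    ((hη₁ s).hasDerivAt.rpow_const (Or.inr (by linarith)))).deriv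

theorem abs_deriv_rpow_const_le (hη : Differentiable ℝ η) (hq : 2 ≤ q) (h₀ : 0 ≤ η s)
    (h₁ : η s ≤ 1) (hM₁ : |deriv η s| ≤ M₁) :
    |deriv (fun s => η s ^ q) s| ≤ q * M₁ * η s ^ (q - 2) := by
  have hpow : η s ^ (q - 1) ≤ η s ^ (q - 2) :=
    Real.rpow_le_rpow_of_exponent_ge' h₀ h₁ (by linarith) (by linarith)
  have hpow₀ := Real.rpow_nonneg h₀ (q - 1)
  have hM₁₀ := (abs_nonneg (deriv η s)).trans hM₁
  rw [deriv_rpow_const_fun hη (by linarith), abs_mul, abs_mul, abs_of_nonneg (by linarith : 0 ≤ q),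
    abs_of_nonneg hpow₀]
  calc |deriv η s| * q * η s ^ (q - 1) ≤ M₁ * q * η s ^ (q - 2) := by gcongr
    _ = q * M₁ * η s ^ (q - 2) := by ring

theorem abs_deriv_deriv_rpow_const_le (hη : ContDiff ℝ 2 η) (hq : 2 ≤ q) (h₀ : 0 ≤ η s)
    (h₁ : η s ≤ 1) (hM₁ : |deriv η s| ≤ M₁) (hM₂ : |deriv (deriv η) s| ≤ M₂) :
    |deriv (deriv fun s => η s ^ q) s| ≤ (q * M₂ + q * (q - 1) * M₁ ^ 2) * η s ^ (q - 2) := by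
  have hpow : η s ^ (q - 1) ≤ η s ^ (q - 2) :=
    Real.rpow_le_rpow_of_exponent_ge' h₀ h₁ (by linarith) (by linarith)
  have hpow₁ := Real.rpow_nonneg h₀ (q - 1)
  have hpow₂ := Real.rpow_nonneg h₀ (q - 2)
  have hM₂₀ := (abs_nonneg (deriv (deriv η) s)).trans hM₂
  have hqq : 0 ≤ q * (q - 1) := by nlinarith
  rw [deriv_deriv_rpow_const_fun hη hq]
  calc _ ≤ |deriv (deriv η) s| * q * η s ^ (q - 1)
          + |deriv η s| ^ 2 * (q * (q - 1)) * η s ^ (q - 2) := by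
        refine (abs_add_le _ _).trans_eq ?_
        simp only [abs_mul, abs_of_nonneg (by linarith : 0 ≤ q),
          abs_of_nonneg (by linarith : 0 ≤ q - 1), abs_of_nonneg hpow₁, abs_of_nonneg hpow₂]
        ring
    _ ≤ M₂ * q * η s ^ (q - 2) + M₁ ^ 2 * (q * (q - 1)) * η s ^ (q - 2) := by
        have := abs_nonneg (deriv η s)
        gcongr
    _ = _ := by ring

end PowerOfCutoff

theorem Real.HolderConjugate.rpow_two_mul_rpow_one_div {p p' u : ℝ} (h : p.HolderConjugate p')
    (hu : 0 ≤ u) : (u ^ (2 * p')) ^ (1 / p) = u ^ (2 * p' - 2) := by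
  have hp' : p' ≠ 0 := h.symm.ne_zero
  rw [← Real.rpow_mul hu, one_div, ← h.symm.one_sub_inv]
  congr 1
  field_simp

section Cutoff

variable {p p' : ℝ} {η ηstar : ℝ → ℝ}

theorem abs_derivs_rpow_le_rpow_cutoffStar (hpp' : p.HolderConjugate p')
    (hη : ContDiff ℝ 2 η) (hη01 : ∀ s, 0 ≤ η s ∧ η s ≤ 1) (hη1 : ∀ s ≤ (1/2 : ℝ), η s = 1)
    (hηstar : ∀ s, ηstar s = if s < (1/2 : ℝ) then 0 else η s) {M₁ M₂ s : ℝ}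
    (hM₁ : |deriv η s| ≤ M₁) (hM₂ : |deriv (deriv η) s| ≤ M₂) :
    |deriv (fun s => η s ^ (2 * p')) s| ≤ 2 * p' * M₁ * (ηstar s ^ (2 * p')) ^ (1 / p) ∧
      |deriv (deriv fun s => η s ^ (2 * p')) s|
        ≤ (2 * p' * M₂ + 2 * p' * (2 * p' - 1) * M₁ ^ 2) * (ηstar s ^ (2 * p')) ^ (1 / p) := by
  have hp' : 1 < p' := hpp'.symm.lt
  rcases lt_or_ge s (1/2) with hs | hs
  · have hG : ∀ u < (1/2 : ℝ), η u ^ (2 * p') = 1 := fun u hu => by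
      rw [hη1 u hu.le, Real.one_rpow]
    have hG' : ∀ u < (1/2 : ℝ), deriv (fun s => η s ^ (2 * p')) u = 0 :=
      fun u hu => deriv_eq_zero_of_forall_lt_eq hG hu
    rw [hG' s hs, deriv_eq_zero_of_forall_lt_eq hG' hs, hηstar, if_pos hs,
      Real.zero_rpow (by linarith), Real.zero_rpow hpp'.one_div_ne_zero]
    simp
  · rw [hηstar, if_neg (not_lt.2 hs), hpp'.rpow_two_mul_rpow_one_div (hη01 s).1]
    exact ⟨abs_deriv_rpow_const_le (hη.differentiable two_ne_zero) (by linarith) (hη01 s).1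
        (hη01 s).2 hM₁,
      abs_deriv_deriv_rpow_const_le hη (by linarith) (hη01 s).1 (hη01 s).2 hM₁ hM₂⟩

theorem exists_abs_derivs_rpow_le_rpow_cutoffStar (hpp' : p.HolderConjugate p')
    (hη : ContDiff ℝ 2 η) (hη01 : ∀ s, 0 ≤ η s ∧ η s ≤ 1) (hη1 : ∀ s ≤ (1/2 : ℝ), η s = 1)
    (hηstar : ∀ s, ηstar s = if s < (1/2 : ℝ) then 0 else η s) :
    ∃ A B : ℝ, 0 ≤ A ∧ 0 ≤ B ∧ ∀ s ∈ Set.Icc (0 : ℝ) 1,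
      |deriv (fun s => η s ^ (2 * p')) s| ≤ A * (ηstar s ^ (2 * p')) ^ (1 / p) ∧
      |deriv (deriv fun s => η s ^ (2 * p')) s| ≤ B * (ηstar s ^ (2 * p')) ^ (1 / p) := by
  obtain ⟨M₁, hM₁⟩ := (isCompact_Icc (a := (0 : ℝ)) (b := 1)).exists_bound_of_continuousOn
    (hη.continuous_deriv one_le_two).continuousOn
  obtain ⟨M₂, hM₂⟩ := (isCompact_Icc (a := (0 : ℝ)) (b := 1)).exists_bound_of_continuousOn
    (hη.deriv' (n := 1)).continuous_deriv_one.continuousOn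
  have hM₁₀ : 0 ≤ M₁ := (norm_nonneg _).trans (hM₁ 0 (by simp))
  have hM₂₀ : 0 ≤ M₂ := (norm_nonneg _).trans (hM₂ 0 (by simp))
  have hp' : 1 < p' := hpp'.symm.lt
  have hq : 0 ≤ 2 * p' - 1 := by linarith
  exact ⟨_, _, by positivity, by positivity, fun s hs =>
    abs_derivs_rpow_le_rpow_cutoffStar hpp' hη hη01 hη1 hηstar (hM₁ s hs) (hM₂ s hs)⟩

end Cutoff

theorem abs_two_mul_add_four_mul_le {n r R a b A B W : ℝ} (hR : 0 < R) (hn : 0 ≤ n)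
    (hr : 0 ≤ r) (hrR : r ≤ R) (ha : |a| ≤ A * W) (hb : |b| ≤ B * W) :
    |2 * n * (R⁻¹ * a) + 4 * r * (R⁻¹ ^ 2 * b)| ≤ (2 * n * A + 4 * B) * R⁻¹ * W := by
  have hBW : 0 ≤ B * W := (abs_nonneg b).trans hb
  calc _ ≤ 2 * n * (R⁻¹ * (A * W)) + 4 * R * (R⁻¹ ^ 2 * (B * W)) := by
        refine (abs_add_le _ _).trans (add_le_add ?_ ?_)
        · rw [abs_mul, abs_mul R⁻¹, abs_of_nonneg (by positivity), abs_of_nonneg (by positivity)]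
          gcongr
        · rw [abs_mul, abs_mul (R⁻¹ ^ 2), abs_of_nonneg (by positivity),
            abs_of_nonneg (by positivity)]
          gcongr
    _ = _ := by field_simp

theorem stmt_12_general (N : ℕ) (b : ℝ → ℝ)
    (Φ : ℝ → ℝ)
    (hΦ : ∀ t, Φ t = ∫ s in Set.Ioi t, Real.exp (-∫ σ in t..s, b σ))
    (p p' : ℝ) (hp : 1 < p) (hp' : p' = p / (p - 1))
    (η ηstar : ℝ → ℝ) (hη : ContDiff ℝ 2 η)
    (hη01 : ∀ s, 0 ≤ η s ∧ η s ≤ 1)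
    (hη1 : ∀ s ≤ (1/2 : ℝ), η s = 1)
    (hηstar : ∀ s, ηstar s = if s < (1/2 : ℝ) then 0 else η s)
    (ψ ψstar : ℝ → EuclideanSpace ℝ (Fin N) → ℝ → ℝ)
    (hψ : ∀ R x t, ψ R x t
      = η (R⁻¹ * (1 + ‖x‖ ^ 2 + ∫ σ in (0:ℝ)..t, Φ σ)) ^ (2 * p'))
    (hψstar : ∀ R x t, ψstar R x t
      = ηstar (R⁻¹ * (1 + ‖x‖ ^ 2 + ∫ σ in (0:ℝ)..t, Φ σ)) ^ (2 * p')) :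
    ∃ C₂ > (0 : ℝ),
      ∀ R > (0 : ℝ), ∀ x : EuclideanSpace ℝ (Fin N), ∀ t ≥ (0 : ℝ),
        1 + ‖x‖ ^ 2 + (∫ σ in (0:ℝ)..t, Φ σ) ≤ R →
        |∑ i : Fin N,
            fderiv ℝ (fun y => fderiv ℝ (fun z => ψ R z t) y
              (EuclideanSpace.single i (1:ℝ))) x (EuclideanSpace.single i (1:ℝ))| ≤
          C₂ * R⁻¹ * (ψstar R x t) ^ (1 / p) := by
  have hpp' : p.HolderConjugate p' := hp' ▸ Real.HolderConjugate.conjExponent hp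
  obtain ⟨A, B, hA, hB, hbound⟩ :=
    exists_abs_derivs_rpow_le_rpow_cutoffStar hpp' hη hη01 hη1 hηstar
  refine ⟨1 + 2 * N * A + 4 * B, by positivity, fun R hR x t ht hle => ?_⟩
  have hc : 0 ≤ ∫ σ in (0:ℝ)..t, Φ σ := intervalIntegral.integral_nonneg ht fun σ _ => by
    rw [hΦ]; exact integral_nonneg fun s => (Real.exp_pos _).le
  simp only [hψ, hψstar]
  set c := ∫ σ in (0:ℝ)..t, Φ σ
  have hG : ContDiff ℝ 2 fun r => η (R⁻¹ * r + R⁻¹ * (1 + c)) ^ (2 * p') :=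
    (hη.rpow_const_of_le (by norm_num; linarith [hpp'.symm.lt])).comp (by fun_prop)
  simp only [show ∀ r, R⁻¹ * (1 + r + c) = R⁻¹ * r + R⁻¹ * (1 + c) from fun r => by ring]
  rw [sum_fderiv_fderiv_comp_norm_sq hG, deriv_deriv_comp_mul_add (fun s => η s ^ (2 * p')),
    deriv_comp_mul_add (fun s => η s ^ (2 * p')), Fintype.card_fin]
  beta_reduce
  set s := R⁻¹ * ‖x‖ ^ 2 + R⁻¹ * (1 + c) with hs
  have hs01 : s ∈ Set.Icc 0 1 := by
    rw [show s = (1 + ‖x‖ ^ 2 + c) / R by rw [hs]; ring]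
    exact ⟨by positivity, (div_le_one hR).2 hle⟩
  have hηstar₀ : 0 ≤ ηstar s := by rw [hηstar]; split_ifs <;> simp [(hη01 s).1]
  obtain ⟨hG₁, hG₂⟩ := hbound s hs01
  calc _ ≤ (2 * N * A + 4 * B) * R⁻¹ * (ηstar s ^ (2 * p')) ^ (1 / p) :=
        abs_two_mul_add_four_mul_le hR (Nat.cast_nonneg N) (sq_nonneg _) (by linarith) hG₁ hG₂
    _ ≤ _ := by gcongr; linarith

/-- Spatial Laplacian estimate for the rescaled cut-off function `ψ_R`:
there exists `C₂ > 0` (depending only on `N`, `p` and `η`) such that for every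
`R > 0` and `(x,t) ∈ ℝ^N × [0,∞)` with `1 + |x|² + ∫₀^t Φ ≤ R`,
`|Δ_x ψ_R(x,t)| ≤ C₂ R⁻¹ [ψ_R^*(x,t)]^{1/p}`. The Laplacian is written as the
sum of the second derivatives in the coordinate directions. -/
theorem stmt_12 (N : ℕ) (hN : 1 ≤ N) (b : ℝ → ℝ) (hb : ContDiff ℝ 1 b)
    (hbpos : ∀ t ≥ (0 : ℝ), 0 < b t)
    (hlimsup : Filter.limsup (fun t => |deriv b t| / (b t) ^ 2) Filter.atTop < 1)
    (Φ : ℝ → ℝ)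
    (hΦ : ∀ t, Φ t = ∫ s in Set.Ioi t, Real.exp (-∫ σ in t..s, b σ))
    (p p' : ℝ) (hp : 1 < p) (hp' : p' = p / (p - 1))
    (η ηstar : ℝ → ℝ) (hη : ContDiff ℝ 2 η)
    (hη01 : ∀ s, 0 ≤ η s ∧ η s ≤ 1)
    (hη1 : ∀ s ≤ (1/2 : ℝ), η s = 1)
    (hηmono : AntitoneOn η (Set.Ioo (1/2 : ℝ) 1))
    (hη0 : ∀ s ≥ (1 : ℝ), η s = 0)
    (hηstar : ∀ s, ηstar s = if s < (1/2 : ℝ) then 0 else η s)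
    (ψ ψstar : ℝ → EuclideanSpace ℝ (Fin N) → ℝ → ℝ)
    (hψ : ∀ R x t, ψ R x t
      = η (R⁻¹ * (1 + ‖x‖ ^ 2 + ∫ σ in (0:ℝ)..t, Φ σ)) ^ (2 * p'))
    (hψstar : ∀ R x t, ψstar R x t
      = ηstar (R⁻¹ * (1 + ‖x‖ ^ 2 + ∫ σ in (0:ℝ)..t, Φ σ)) ^ (2 * p')) :
    ∃ C₂ > (0 : ℝ),
      ∀ R > (0 : ℝ), ∀ x : EuclideanSpace ℝ (Fin N), ∀ t ≥ (0 : ℝ),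
        1 + ‖x‖ ^ 2 + (∫ σ in (0:ℝ)..t, Φ σ) ≤ R →
        |∑ i : Fin N,
            fderiv ℝ (fun y => fderiv ℝ (fun z => ψ R z t) y
              (EuclideanSpace.single i (1:ℝ))) x (EuclideanSpace.single i (1:ℝ))| ≤
          C₂ * R⁻¹ * (ψstar R x t) ^ (1 / p) :=
  stmt_12_general N b Φ hΦ p p' hp hp' η ηstar hη hη01 hη1 hηstar ψ ψstar hψ hψstar
end
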